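/- arXiv:1006.3925 — 6 statements merged into one kernel-verified Lean document; each statement's English description precedes it below -/
import Mathlib

section
/- Given σ>0, for every final point X₁=(x₁,y₁,θ₁,0) with |(x₁,y₁)| ≥ 8√(π/σ), there exist λ₀ ∈ [0,√(3π/σ)], λ₁ ∈ [0,√(5π/σ)] and T ≥ 2λ₀+2λ₁ such that the trajectory of the system x'=cos θ, y'=sin θ, θ'=κ, κ'=u starting at X₀=(0,0,π/2,0), with piecewise constant control u equal to −σ on [0,λ₀], +σ on (λ₀,2λ₀], 0 on (2λ₀,T−2λ₁], +σ on (T−2λ₁,T−λ₁], and −σ on (T−λ₁,T], reaches X₁ at time T (the angle θ₁ attained modulo 2π). -/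
/-!
The control is a sum of jumps `w • 1_(b, ∞)`, so the curvature is the linear spline
`∑ w (t - b)⁺` and the heading is `π/2 - arcPhase σ l₀ t + arcPhase σ l₁ (t - (T - 2l₁))`, where
`arcPhase σ l` is the phase along a single turn. In complex notation the endpoint is
`i · conj (arcIntegral σ l₀) + e^{i(π/2 - σl₀²)} (L + arcIntegral σ l₁)`, where
`‖arcIntegral σ l‖ ≤ 2l` and `L = T - 2l₀ - 2l₁` is the length of the straight segment.

Choose the turning angles `σl₀² = a` and `σl₁² = a + c`, with `c ∈ [0, 2π)` and `π/2 + c ≡ θ₁`.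
For `a ∈ [0, 3π]` the turns contribute at most `2(√3 + √5)√(π/σ) < 8√(π/σ) ≤ |z₁|`, so what
remains of `z₁` after subtracting them lies in the open half plane facing `z₁`, while the
direction `e^{i(π/2 - a)}` of the straight segment sweeps across this half plane as `a` runs over
a suitable interval of length `π`. The intermediate value theorem lines the two up, which gives
`a` and `L ≥ 0`.
-/

open MeasureTheory Real Set

noncomputable section

/-- The piecewise-constant reference control of Proposition `trajec`:
`-σ` on `[0,l₀]`, `+σ` on `(l₀,2l₀]`, `0` on `(2l₀,T-2l₁]`, `+σ` on
`(T-2l₁,T-l₁]`, `-σ` on `(T-l₁,T]`. -/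
def refCtrl (σ l₀ l₁ T t : ℝ) : ℝ :=
  if t ≤ l₀ then -σ
  else if t ≤ 2*l₀ then σ
  else if t ≤ T - 2*l₁ then 0
  else if t ≤ T - l₁ then σ
  else -σ

open Complex (I)
open scoped Complex ComplexConjugate

theorem continuous_posPart_sub (c : ℝ) : Continuous fun t : ℝ => (t - c)⁺ :=
  continuous_posPart.comp (continuous_sub_right c)

theorem hasDerivAt_posPart_sub_of_ne {c x : ℝ} (hx : x ≠ c) :
    HasDerivAt (fun t => (t - c)⁺) ((Ioi c).indicator 1 x) x := by
  rcases hx.lt_or_gt with hxc | hcx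
  · rw [indicator_of_notMem (notMem_Ioi.2 hxc.le)]
    refine (hasDerivAt_const x (0 : ℝ)).congr_of_eventuallyEq ?_
    filter_upwards [Iio_mem_nhds hxc] with t ht
    exact posPart_eq_zero.2 (sub_nonpos.2 (le_of_lt ht))
  · rw [indicator_of_mem (mem_Ioi.2 hcx), Pi.one_apply]
    refine ((hasDerivAt_id x).sub_const c).congr_of_eventuallyEq ?_
    filter_upwards [Ioi_mem_nhds hcx] with t ht
    exact posPart_eq_self.2 (sub_nonneg.2 (le_of_lt ht))

theorem hasDerivAt_posPart_sub_sq_div_two (c x : ℝ) :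
    HasDerivAt (fun t => (t - c)⁺ ^ 2 / 2) (x - c)⁺ x := by
  have hcont := continuous_posPart_sub c
  refine hasDerivAt_of_hasDerivAt_of_ne' (x := c) (fun y hy => ?_)
    ((hcont.pow 2).div_const 2).continuousAt hcont.continuousAt x
  refine (((hasDerivAt_posPart_sub_of_ne hy).fun_pow 2).div_const 2).congr_deriv ?_
  rcases lt_or_ge c y with hcy | hyc
  · rw [indicator_of_mem (mem_Ioi.2 hcy)]
    norm_num
  · rw [indicator_of_notMem (notMem_Ioi.2 hyc), posPart_eq_zero.2 (sub_nonpos.2 hyc)]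
    norm_num

theorem monotone_indicator_Ioi_one (c : ℝ) : Monotone ((Ioi c).indicator (1 : ℝ → ℝ)) :=
  fun a b hab => by
    by_cases ha : c < a
    · simp [indicator_of_mem, ha, ha.trans_le hab]
    · simp [indicator_of_notMem, ha, indicator_nonneg]

theorem integral_indicator_Ioi_one {c : ℝ} (hc : 0 ≤ c) (t : ℝ) :
    ∫ s in (0 : ℝ)..t, (Ioi c).indicator 1 s = (t - c)⁺ := by
  rw [integral_eq_of_hasDerivAt_off_countable _ _ (countable_singleton c)
    (continuous_posPart_sub c).continuousOn
    (fun x hx => hasDerivAt_posPart_sub_of_ne hx.2)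
    (monotone_indicator_Ioi_one c).intervalIntegrable]
  simp [posPart_eq_zero.2 (neg_nonpos.2 hc)]

theorem integral_posPart_sub {c : ℝ} (hc : 0 ≤ c) (t : ℝ) :
    ∫ s in (0 : ℝ)..t, (s - c)⁺ = (t - c)⁺ ^ 2 / 2 := by
  rw [intervalIntegral.integral_eq_sub_of_hasDerivAt
    (fun x _ => hasDerivAt_posPart_sub_sq_div_two c x)
    ((continuous_posPart_sub c).intervalIntegrable _ _)]
  simp [posPart_eq_zero.2 (neg_nonpos.2 hc)]

section KnotSum

variable {ι : Type*} (s : Finset ι) (w b : ι → ℝ)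

theorem integral_sum_mul_indicator_Ioi (hb : ∀ i ∈ s, 0 ≤ b i) (t : ℝ) :
    ∫ x in (0 : ℝ)..t, ∑ i ∈ s, w i * (Ioi (b i)).indicator 1 x =
      ∑ i ∈ s, w i * (t - b i)⁺ := by
  rw [intervalIntegral.integral_finsetSum fun i _ =>
    (monotone_indicator_Ioi_one (b i)).intervalIntegrable.const_mul (w i)]
  refine Finset.sum_congr rfl fun i hi => ?_
  rw [intervalIntegral.integral_const_mul, integral_indicator_Ioi_one (hb i hi)]

theorem integral_sum_mul_posPart_sub (hb : ∀ i ∈ s, 0 ≤ b i) (t : ℝ) :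
    ∫ x in (0 : ℝ)..t, ∑ i ∈ s, w i * (x - b i)⁺ =
      ∑ i ∈ s, w i * ((t - b i)⁺ ^ 2 / 2) := by
  rw [intervalIntegral.integral_finsetSum fun i _ =>
    ((continuous_posPart_sub (b i)).intervalIntegrable 0 t).const_mul (w i)]
  refine Finset.sum_congr rfl fun i hi => ?_
  rw [intervalIntegral.integral_const_mul, integral_posPart_sub (hb i hi)]

end KnotSum

theorem integral_cexp_mul_I {θ : ℝ → ℝ} {a b : ℝ} (hθ : ContinuousOn θ (uIcc a b)) :
    ∫ t in a..b, cexp (θ t * I) =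
      ((∫ t in a..b, Real.cos (θ t) : ℝ) : ℂ) + (∫ t in a..b, Real.sin (θ t) : ℝ) * I := by
  have hcos : IntervalIntegrable (fun t => (Real.cos (θ t) : ℂ)) volume a b :=
    (Complex.continuous_ofReal.comp_continuousOn
      (Real.continuous_cos.comp_continuousOn hθ)).intervalIntegrable
  have hsin : IntervalIntegrable (fun t => (Real.sin (θ t) : ℂ) * I) volume a b :=
    ((Complex.continuous_ofReal.comp_continuousOn
      (Real.continuous_sin.comp_continuousOn hθ)).mul continuousOn_const).intervalIntegrable
  rw [← intervalIntegral.integral_ofReal, ← intervalIntegral.integral_ofReal,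
    ← intervalIntegral.integral_mul_const, ← intervalIntegral.integral_add hcos hsin]
  refine intervalIntegral.integral_congr fun t _ => ?_
  simp only [Complex.exp_mul_I, Complex.ofReal_cos, Complex.ofReal_sin]

theorem cexp_pi_div_two_sub_mul_I (φ : ℝ) :
    cexp ((π / 2 - φ : ℝ) * I) = I * conj (cexp (φ * I)) := by
  apply Complex.ext <;>
    simp only [Complex.exp_ofReal_mul_I_re, Complex.exp_ofReal_mul_I_im, Complex.mul_re,
      Complex.mul_im, Complex.I_re, Complex.I_im, Complex.conj_re, Complex.conj_im,
      Real.cos_pi_div_two_sub, Real.sin_pi_div_two_sub] <;> ring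

def arcPhase (σ l x : ℝ) : ℝ := σ * (x⁺ ^ 2 / 2 - (x - l)⁺ ^ 2 + (x - 2 * l)⁺ ^ 2 / 2)

section Arc

variable {σ l x : ℝ}

theorem arcPhase_of_nonpos (hl : 0 ≤ l) (hx : x ≤ 0) : arcPhase σ l x = 0 := by
  rw [arcPhase]
  repeat rw [posPart_of_nonpos (by linarith)]
  ring

theorem arcPhase_of_two_mul_le (hl : 0 ≤ l) (hx : 2 * l ≤ x) : arcPhase σ l x = σ * l ^ 2 := by
  rw [arcPhase]
  repeat rw [posPart_of_nonneg (by linarith)]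
  ring

theorem continuous_arcPhase (σ : ℝ) : Continuous fun p : ℝ × ℝ => arcPhase σ p.1 p.2 := by
  unfold arcPhase
  have := continuous_posPart (α := ℝ)
  fun_prop

def arcIntegral (σ l : ℝ) : ℂ := ∫ x in (0 : ℝ)..2 * l, cexp (arcPhase σ l x * I)

theorem norm_arcIntegral_le (σ : ℝ) (hl : 0 ≤ l) : ‖arcIntegral σ l‖ ≤ 2 * l := by
  have := intervalIntegral.norm_integral_le_of_norm_le_const (a := 0) (b := 2 * l) (C := 1)
    (f := fun x => cexp (arcPhase σ l x * I)) fun x _ => (Complex.norm_exp_ofReal_mul_I _).le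
  simpa [arcIntegral, abs_of_nonneg hl] using this

theorem continuous_arcIntegral (σ : ℝ) : Continuous (arcIntegral σ) :=
  intervalIntegral.continuous_parametric_intervalIntegral_of_continuous
    (by have := continuous_arcPhase σ; fun_prop) (continuous_const.mul continuous_id)

end Arc

def refKnots (l₀ l₁ T : ℝ) : Fin 6 → ℝ := ![0, l₀, 2 * l₀, T - 2 * l₁, T - l₁, T]

def refJumps (σ : ℝ) : Fin 6 → ℝ := ![-σ, 2 * σ, -σ, σ, -2 * σ, σ]

section Reference

variable {σ l₀ l₁ T : ℝ}

theorem refCtrl_eq_sum (hl₀ : 0 ≤ l₀) (hl₁ : 0 ≤ l₁) (hT : 2 * l₀ + 2 * l₁ ≤ T) {s : ℝ}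
    (hs : s ∈ Ioc 0 T) :
    refCtrl σ l₀ l₁ T s = ∑ i, refJumps σ i * (Ioi (refKnots l₀ l₁ T i)).indicator 1 s := by
  obtain ⟨hs0, hsT⟩ := hs
  -- used only after the knots are evaluated, so that the `Decidable` instances of the `if`s match
  have hind : ∀ c, (Ioi c).indicator (1 : ℝ → ℝ) s = if c < s then 1 else 0 := fun c => by
    simp [indicator_apply]
  simp only [Fin.sum_univ_six, refJumps, refKnots, Matrix.cons_val]
  simp only [refCtrl, hind, mul_ite, mul_one, mul_zero]
  split_ifs <;> linarith

theorem refKnots_nonneg (hl₀ : 0 ≤ l₀) (hl₁ : 0 ≤ l₁) (hT : 2 * l₀ + 2 * l₁ ≤ T) (i : Fin 6) :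
    0 ≤ refKnots l₀ l₁ T i := by
  fin_cases i <;> simp [refKnots] <;> linarith

def refCurvature (σ l₀ l₁ T t : ℝ) : ℝ := ∫ s in (0 : ℝ)..t, refCtrl σ l₀ l₁ T s

def refHeading (σ l₀ l₁ T t : ℝ) : ℝ := π / 2 + ∫ s in (0 : ℝ)..t, refCurvature σ l₀ l₁ T s

theorem refCurvature_eq_sum (hl₀ : 0 ≤ l₀) (hl₁ : 0 ≤ l₁) (hT : 2 * l₀ + 2 * l₁ ≤ T) {t : ℝ}
    (ht : 0 ≤ t) (htT : t ≤ T) :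
    refCurvature σ l₀ l₁ T t = ∑ i, refJumps σ i * (t - refKnots l₀ l₁ T i)⁺ := by
  rw [refCurvature, ← integral_sum_mul_indicator_Ioi _ _ _
    (fun i _ => refKnots_nonneg hl₀ hl₁ hT i)]
  refine intervalIntegral.integral_congr_ae (Filter.Eventually.of_forall fun s hs => ?_)
  rw [uIoc_of_le ht] at hs
  exact refCtrl_eq_sum hl₀ hl₁ hT ⟨hs.1, hs.2.trans htT⟩

theorem refHeading_eq_sum (hl₀ : 0 ≤ l₀) (hl₁ : 0 ≤ l₁) (hT : 2 * l₀ + 2 * l₁ ≤ T) {t : ℝ}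
    (ht : 0 ≤ t) (htT : t ≤ T) :
    refHeading σ l₀ l₁ T t = π / 2 + ∑ i, refJumps σ i * ((t - refKnots l₀ l₁ T i)⁺ ^ 2 / 2) := by
  rw [refHeading, ← integral_sum_mul_posPart_sub _ _ _
    (fun i _ => refKnots_nonneg hl₀ hl₁ hT i)]
  congr 1
  refine intervalIntegral.integral_congr fun s hs => ?_
  rw [uIcc_of_le ht] at hs
  exact refCurvature_eq_sum hl₀ hl₁ hT hs.1 (hs.2.trans htT)

theorem refCurvature_end (hl₀ : 0 ≤ l₀) (hl₁ : 0 ≤ l₁) (hT : 2 * l₀ + 2 * l₁ ≤ T) :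
    refCurvature σ l₀ l₁ T T = 0 := by
  rw [refCurvature_eq_sum hl₀ hl₁ hT (by linarith) le_rfl]
  simp only [Fin.sum_univ_six, refJumps, refKnots, Matrix.cons_val]
  repeat rw [posPart_of_nonneg (by linarith)]
  ring

theorem refHeading_eq (hl₀ : 0 ≤ l₀) (hl₁ : 0 ≤ l₁) (hT : 2 * l₀ + 2 * l₁ ≤ T) {t : ℝ}
    (ht : 0 ≤ t) (htT : t ≤ T) :
    refHeading σ l₀ l₁ T t = π / 2 - arcPhase σ l₀ t + arcPhase σ l₁ (t - (T - 2 * l₁)) := by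
  rw [refHeading_eq_sum hl₀ hl₁ hT ht htT]
  simp only [Fin.sum_univ_six, refJumps, refKnots, Matrix.cons_val, arcPhase]
  rw [sub_zero, show t - (T - 2 * l₁) - l₁ = t - (T - l₁) by ring,
    show t - (T - 2 * l₁) - 2 * l₁ = t - T by ring]
  ring

theorem continuousOn_refHeading (hl₀ : 0 ≤ l₀) (hl₁ : 0 ≤ l₁) (hT : 2 * l₀ + 2 * l₁ ≤ T) :
    ContinuousOn (refHeading σ l₀ l₁ T) (Icc 0 T) := by
  have hφ : ∀ l, Continuous (arcPhase σ l) := fun l =>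
    (continuous_arcPhase σ).comp (continuous_const.prodMk continuous_id)
  refine ContinuousOn.congr ?_ fun t ht => refHeading_eq hl₀ hl₁ hT ht.1 ht.2
  exact ((continuous_const.sub (hφ l₀)).add ((hφ l₁).comp (continuous_sub_right _))).continuousOn

theorem refHeading_of_le_two_mul (hl₀ : 0 ≤ l₀) (hl₁ : 0 ≤ l₁) (hT : 2 * l₀ + 2 * l₁ ≤ T) {t : ℝ}
    (ht : 0 ≤ t) (ht' : t ≤ 2 * l₀) :
    refHeading σ l₀ l₁ T t = π / 2 - arcPhase σ l₀ t := by
  rw [refHeading_eq hl₀ hl₁ hT ht (by linarith), arcPhase_of_nonpos hl₁ (by linarith), add_zero]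

theorem refHeading_of_two_mul_le (hl₀ : 0 ≤ l₀) (hl₁ : 0 ≤ l₁) (hT : 2 * l₀ + 2 * l₁ ≤ T) {t : ℝ}
    (ht : 2 * l₀ ≤ t) (htT : t ≤ T) :
    refHeading σ l₀ l₁ T t = π / 2 - σ * l₀ ^ 2 + arcPhase σ l₁ (t - (T - 2 * l₁)) := by
  rw [refHeading_eq hl₀ hl₁ hT (by linarith) htT, arcPhase_of_two_mul_le hl₀ ht]

theorem refHeading_end (hl₀ : 0 ≤ l₀) (hl₁ : 0 ≤ l₁) (hT : 2 * l₀ + 2 * l₁ ≤ T) :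
    refHeading σ l₀ l₁ T T = π / 2 - σ * l₀ ^ 2 + σ * l₁ ^ 2 := by
  rw [refHeading_of_two_mul_le hl₀ hl₁ hT (by linarith) le_rfl, sub_sub_cancel,
    arcPhase_of_two_mul_le hl₁ le_rfl]

theorem intervalIntegrable_cexp_refHeading (hl₀ : 0 ≤ l₀) (hl₁ : 0 ≤ l₁)
    (hT : 2 * l₀ + 2 * l₁ ≤ T) ⦃a b : ℝ⦄ (ha : a ∈ Icc 0 T) (hb : b ∈ Icc 0 T) :
    IntervalIntegrable (fun t => cexp (refHeading σ l₀ l₁ T t * I)) volume a b :=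
  ContinuousOn.intervalIntegrable <| (Complex.continuous_exp.comp_continuousOn
    ((Complex.continuous_ofReal.comp_continuousOn (continuousOn_refHeading hl₀ hl₁ hT)).mul
      continuousOn_const)).mono (uIcc_subset_Icc ha hb)

theorem integral_cexp_refHeading_firstTurn (hl₀ : 0 ≤ l₀) (hl₁ : 0 ≤ l₁)
    (hT : 2 * l₀ + 2 * l₁ ≤ T) :
    ∫ t in (0 : ℝ)..2 * l₀, cexp (refHeading σ l₀ l₁ T t * I) = I * conj (arcIntegral σ l₀) := by
  rw [arcIntegral, ← intervalIntegral.intervalIntegral_conj, ← intervalIntegral.integral_const_mul]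
  refine intervalIntegral.integral_congr fun t ht => ?_
  rw [uIcc_of_le (by linarith)] at ht
  rw [refHeading_of_le_two_mul hl₀ hl₁ hT ht.1 ht.2, cexp_pi_div_two_sub_mul_I]

theorem integral_cexp_refHeading_straight (hl₀ : 0 ≤ l₀) (hl₁ : 0 ≤ l₁)
    (hT : 2 * l₀ + 2 * l₁ ≤ T) :
    ∫ t in 2 * l₀..T - 2 * l₁, cexp (refHeading σ l₀ l₁ T t * I) =
      (T - 2 * l₁ - 2 * l₀ : ℝ) * cexp ((π / 2 - σ * l₀ ^ 2 : ℝ) * I) := by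
  rw [← Complex.real_smul, ← intervalIntegral.integral_const]
  refine intervalIntegral.integral_congr fun t ht => ?_
  rw [uIcc_of_le (by linarith)] at ht
  rw [refHeading_of_two_mul_le hl₀ hl₁ hT ht.1 (by linarith [ht.2]),
    arcPhase_of_nonpos hl₁ (by linarith [ht.2]), add_zero]

theorem integral_cexp_refHeading_lastTurn (hl₀ : 0 ≤ l₀) (hl₁ : 0 ≤ l₁)
    (hT : 2 * l₀ + 2 * l₁ ≤ T) :
    ∫ t in T - 2 * l₁..T, cexp (refHeading σ l₀ l₁ T t * I) =
      cexp ((π / 2 - σ * l₀ ^ 2 : ℝ) * I) * arcIntegral σ l₁ := by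
  have shift := intervalIntegral.integral_comp_sub_right (a := T - 2 * l₁) (b := T)
    (fun x => cexp ((π / 2 - σ * l₀ ^ 2 : ℝ) * I) * cexp (arcPhase σ l₁ x * I)) (T - 2 * l₁)
  rw [sub_self, sub_sub_cancel] at shift
  rw [arcIntegral, ← intervalIntegral.integral_const_mul, ← shift]
  refine intervalIntegral.integral_congr fun t ht => ?_
  rw [uIcc_of_le (by linarith)] at ht
  rw [refHeading_of_two_mul_le hl₀ hl₁ hT (by linarith [ht.1]) ht.2, ← Complex.exp_add]
  push_cast
  ring_nf

theorem refPosition_end (hl₀ : 0 ≤ l₀) (hl₁ : 0 ≤ l₁) (hT : 2 * l₀ + 2 * l₁ ≤ T) :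
    ((∫ t in (0 : ℝ)..T, Real.cos (refHeading σ l₀ l₁ T t) : ℝ) : ℂ) +
        (∫ t in (0 : ℝ)..T, Real.sin (refHeading σ l₀ l₁ T t) : ℝ) * I =
      I * conj (arcIntegral σ l₀) +
        cexp ((π / 2 - σ * l₀ ^ 2 : ℝ) * I) * ((T - 2 * l₀ - 2 * l₁ : ℝ) + arcIntegral σ l₁) := by
  have h0 : (0 : ℝ) ∈ Icc 0 T := ⟨le_rfl, by linarith⟩
  have h₀ : 2 * l₀ ∈ Icc 0 T := ⟨by linarith, by linarith⟩
  have h₁ : T - 2 * l₁ ∈ Icc 0 T := ⟨by linarith, by linarith⟩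
  have hT' : T ∈ Icc 0 T := ⟨by linarith, le_rfl⟩
  have hint := intervalIntegrable_cexp_refHeading (σ := σ) hl₀ hl₁ hT
  rw [← integral_cexp_mul_I ((continuousOn_refHeading hl₀ hl₁ hT).mono
      (uIcc_of_le (by linarith)).le),
    ← intervalIntegral.integral_add_adjacent_intervals (hint h0 h₀) (hint h₀ hT'),
    ← intervalIntegral.integral_add_adjacent_intervals (hint h₀ h₁) (hint h₁ hT'),
    integral_cexp_refHeading_firstTurn hl₀ hl₁ hT, integral_cexp_refHeading_straight hl₀ hl₁ hT,
    integral_cexp_refHeading_lastTurn hl₀ hl₁ hT]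
  push_cast
  ring

end Reference

theorem exists_mem_Icc_cexp_mul_I_mul_eq_norm (z : ℂ) :
    ∃ a₀ ∈ Icc 0 (2 * π), cexp (a₀ * I) * z = ‖z‖ := by
  have key : ∀ a : ℝ, cexp (a * I) * z = ‖z‖ * cexp ((a + z.arg : ℝ) * I) := fun a => by
    conv_lhs => rw [← Complex.norm_mul_exp_arg_mul_I z]
    rw [Complex.ofReal_add, add_mul, Complex.exp_add]
    ring
  rcases le_or_gt z.arg 0 with h | h
  · refine ⟨-z.arg, ⟨by linarith, by linarith [Complex.neg_pi_lt_arg z, Real.pi_pos]⟩, ?_⟩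
    rw [key, neg_add_cancel, Complex.ofReal_zero, zero_mul, Complex.exp_zero, mul_one]
  · refine ⟨2 * π - z.arg, ⟨by linarith [Complex.arg_le_pi z], by linarith⟩, ?_⟩
    rw [key, sub_add_cancel]
    push_cast
    rw [Complex.exp_two_pi_mul_I, mul_one]

theorem exists_nonneg_mul_cexp_of_cross_eq_zero {v : ℂ} {ψ : ℝ} (hv : 0 < v.re)
    (hψ : ψ ∈ Icc (-(π / 2)) (π / 2)) (hcross : Real.cos ψ * v.im - Real.sin ψ * v.re = 0) :
    ∃ L : ℝ, 0 ≤ L ∧ v = L * cexp (ψ * I) := by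
  set L := Real.cos ψ * v.re + Real.sin ψ * v.im
  have hre : L * Real.cos ψ = v.re := by
    linear_combination Real.sin ψ * hcross + v.re * Real.sin_sq_add_cos_sq ψ
  refine ⟨L, by nlinarith [Real.cos_nonneg_of_mem_Icc hψ], Complex.ext ?_ ?_⟩
  · simp only [Complex.re_ofReal_mul, Complex.exp_ofReal_mul_I_re, hre]
  · simp only [Complex.im_ofReal_mul, Complex.exp_ofReal_mul_I_im]
    linear_combination Real.cos ψ * hcross - v.im * Real.sin_sq_add_cos_sq ψ

theorem exists_eq_add_mul_cexp_of_norm_lt {F : ℝ → ℂ} {z : ℂ} {a₀ : ℝ}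
    (hF : ContinuousOn F (Icc a₀ (a₀ + π))) (hFz : ∀ a ∈ Icc a₀ (a₀ + π), ‖F a‖ < ‖z‖)
    (ha₀ : cexp (a₀ * I) * z = ‖z‖) :
    ∃ a ∈ Icc a₀ (a₀ + π), ∃ L : ℝ, 0 ≤ L ∧ z = F a + L * cexp ((π / 2 - a : ℝ) * I) := by
  -- After rotating by `a₀`, `z` lies on the positive real axis, so `z - F a` stays in the right
  -- half plane while the direction `e^{i(a₀ + π/2 - a)}` turns from `i` to `-i`.
  set v : ℝ → ℂ := fun a => cexp (a₀ * I) * (z - F a)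
  have hv : ∀ a ∈ Icc a₀ (a₀ + π), 0 < (v a).re := fun a ha => by
    have : (cexp (a₀ * I) * F a).re < ‖z‖ := (Complex.re_le_norm _).trans_lt <| by
      rw [norm_mul, Complex.norm_exp_ofReal_mul_I, one_mul]
      exact hFz a ha
    simp only [v, mul_sub, ha₀, Complex.sub_re, Complex.ofReal_re]
    linarith
  set g : ℝ → ℝ := fun a =>
    Real.cos (a₀ + π / 2 - a) * (v a).im - Real.sin (a₀ + π / 2 - a) * (v a).re
  have hg : ContinuousOn g (Icc a₀ (a₀ + π)) := by
    have hvc : ContinuousOn v (Icc a₀ (a₀ + π)) :=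
      continuousOn_const.mul (continuousOn_const.sub hF)
    exact ((by fun_prop : Continuous fun a => Real.cos (a₀ + π / 2 - a)).continuousOn.mul
      (Complex.continuous_im.comp_continuousOn hvc)).sub
      ((by fun_prop : Continuous fun a => Real.sin (a₀ + π / 2 - a)).continuousOn.mul
      (Complex.continuous_re.comp_continuousOn hvc))
  have hπ := Real.pi_pos
  have hg_left : g a₀ ≤ 0 := by
    have := hv a₀ ⟨le_rfl, by linarith⟩
    simp only [g, add_sub_cancel_left, Real.cos_pi_div_two, Real.sin_pi_div_two]
    linarith
  have hg_right : 0 ≤ g (a₀ + π) := by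
    have := hv (a₀ + π) ⟨by linarith, le_rfl⟩
    simp only [g, show a₀ + π / 2 - (a₀ + π) = -(π / 2) by ring, Real.cos_neg, Real.sin_neg,
      Real.cos_pi_div_two, Real.sin_pi_div_two]
    linarith
  obtain ⟨a, ha, hga⟩ := intermediate_value_Icc (by linarith) hg ⟨hg_left, hg_right⟩
  obtain ⟨L, hL, hvL⟩ := exists_nonneg_mul_cexp_of_cross_eq_zero (hv a ha)
    ⟨by linarith [ha.2], by linarith [ha.1]⟩ hga
  refine ⟨a, ha, L, hL, ?_⟩
  have hunrot : cexp (-a₀ * I) * cexp (a₀ * I) = 1 := by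
    rw [← Complex.exp_add, neg_mul, neg_add_cancel, Complex.exp_zero]
  have hdir : cexp (-a₀ * I) * cexp ((a₀ + π / 2 - a : ℝ) * I) = cexp ((π / 2 - a : ℝ) * I) := by
    rw [← Complex.exp_add]
    push_cast
    ring_nf
  linear_combination cexp (-a₀ * I) * hvL - (z - F a) * hunrot + L * hdir

theorem exists_mem_Ico_add_eq_add_two_pi_mul (x y : ℝ) :
    ∃ c ∈ Ico 0 (2 * π), ∃ k : ℤ, x + c = y + 2 * π * k :=
  ⟨toIcoMod two_pi_pos 0 (y - x), by simpa using toIcoMod_mem_Ico two_pi_pos 0 (y - x),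
    -toIcoDiv two_pi_pos 0 (y - x), by rw [← self_sub_toIcoDiv_zsmul]; push_cast; ring⟩

theorem sqrt_three_mul_add_sqrt_five_mul_lt {x : ℝ} (hx : 0 < x) :
    √(3 * x) + √(5 * x) < 4 * √x := by
  rw [Real.sqrt_mul (by norm_num), Real.sqrt_mul (by norm_num), ← add_mul]
  have h3 : √3 < 7 / 4 := (Real.sqrt_lt' (by norm_num)).2 (by norm_num)
  have h5 : √5 < 9 / 4 := (Real.sqrt_lt' (by norm_num)).2 (by norm_num)
  exact mul_lt_mul_of_pos_right (by linarith) (Real.sqrt_pos.2 hx)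

def turnLength (σ a : ℝ) : ℝ := √(a / σ)

def turnsDisplacement (σ c a : ℝ) : ℂ :=
  I * conj (arcIntegral σ (turnLength σ a)) +
    cexp ((π / 2 - a : ℝ) * I) * arcIntegral σ (turnLength σ (a + c))

section Turns

variable {σ : ℝ}

theorem turnLength_nonneg (σ a : ℝ) : 0 ≤ turnLength σ a := Real.sqrt_nonneg _

theorem mul_turnLength_sq (hσ : 0 < σ) {a : ℝ} (ha : 0 ≤ a) : σ * turnLength σ a ^ 2 = a := by
  rw [turnLength, Real.sq_sqrt (div_nonneg ha hσ.le)]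
  field_simp

theorem turnLength_mono (hσ : 0 < σ) : Monotone (turnLength σ) := fun _ _ hab =>
  Real.sqrt_le_sqrt (div_le_div_of_nonneg_right hab hσ.le)

theorem continuous_turnsDisplacement (σ c : ℝ) : Continuous (turnsDisplacement σ c) := by
  have := continuous_arcIntegral σ
  have := Complex.continuous_conj
  unfold turnsDisplacement turnLength
  fun_prop

theorem norm_turnsDisplacement_lt (hσ : 0 < σ) {a c : ℝ} (ha : a ∈ Icc 0 (3 * π))
    (hc : c ≤ 2 * π) : ‖turnsDisplacement σ c a‖ < 8 * √(π / σ) := by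
  have h₀ := norm_arcIntegral_le σ (turnLength_nonneg σ a)
  have h₁ := norm_arcIntegral_le σ (turnLength_nonneg σ (a + c))
  have hl₀ : turnLength σ a ≤ √(3 * (π / σ)) := by
    rw [← mul_div_assoc]; exact turnLength_mono hσ ha.2
  have hl₁ : turnLength σ (a + c) ≤ √(5 * (π / σ)) := by
    rw [← mul_div_assoc]; exact turnLength_mono hσ (by linarith [ha.2])
  calc ‖turnsDisplacement σ c a‖
      ≤ ‖arcIntegral σ (turnLength σ a)‖ + ‖arcIntegral σ (turnLength σ (a + c))‖ := by
        refine (norm_add_le _ _).trans_eq ?_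
        rw [norm_mul, norm_mul, Complex.norm_I, Complex.norm_conj, Complex.norm_exp_ofReal_mul_I,
          one_mul, one_mul]
    _ ≤ 2 * (√(3 * (π / σ)) + √(5 * (π / σ))) := by linarith
    _ < 8 * √(π / σ) := by
        linarith [sqrt_three_mul_add_sqrt_five_mul_lt (div_pos Real.pi_pos hσ)]

theorem refEndpoint_of_turnLength (hσ : 0 < σ) {a c L l₀ l₁ T : ℝ} (ha : 0 ≤ a) (hc : 0 ≤ c)
    (hL : 0 ≤ L) (hl₀ : l₀ = turnLength σ a) (hl₁ : l₁ = turnLength σ (a + c))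
    (hT : T = 2 * l₀ + 2 * l₁ + L) :
    ((∫ t in (0 : ℝ)..T, Real.cos (refHeading σ l₀ l₁ T t) : ℝ) : ℂ) +
        (∫ t in (0 : ℝ)..T, Real.sin (refHeading σ l₀ l₁ T t) : ℝ) * I =
      turnsDisplacement σ c a + L * cexp ((π / 2 - a : ℝ) * I) ∧
    refHeading σ l₀ l₁ T T = π / 2 + c ∧ refCurvature σ l₀ l₁ T T = 0 := by
  subst hl₀ hl₁ hT
  have h₀ := turnLength_nonneg σ a
  have h₁ := turnLength_nonneg σ (a + c)
  have hT := le_add_of_nonneg_right (a := 2 * turnLength σ a + 2 * turnLength σ (a + c)) hL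
  refine ⟨?_, ?_, refCurvature_end h₀ h₁ hT⟩
  · rw [refPosition_end h₀ h₁ hT, mul_turnLength_sq hσ ha, turnsDisplacement]
    push_cast
    ring
  · rw [refHeading_end h₀ h₁ hT, mul_turnLength_sq hσ ha,
      mul_turnLength_sq hσ (add_nonneg ha hc)]
    ring

end Turns

/-- for `|(x₁,y₁)| ≥ 8√(π/σ)` there are `l₀ ∈ [0,√(3π/σ)]`,
`l₁ ∈ [0,√(5π/σ)]`, `T ≥ 2l₀+2l₁` such that the trajectory of
`x'=cos θ, y'=sin θ, θ'=κ, κ'=u` starting at `X₀=(0,0,π/2,0)` with the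
reference control reaches `X₁=(x₁,y₁,θ₁,0)` at time `T`
(angle attained modulo `2π`). -/
theorem reference_trajectory_reaches_target
    (σ : ℝ) (hσ : 0 < σ) (x₁ y₁ θ₁ : ℝ)
    (hfar : 8 * Real.sqrt (π / σ) ≤ Real.sqrt (x₁^2 + y₁^2)) :
    ∃ (l₀ l₁ T : ℝ),
      l₀ ∈ Set.Icc 0 (Real.sqrt (3*π/σ)) ∧
      l₁ ∈ Set.Icc 0 (Real.sqrt (5*π/σ)) ∧
      2*l₀ + 2*l₁ ≤ T ∧
      (let u : ℝ → ℝ := refCtrl σ l₀ l₁ T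
       let κ : ℝ → ℝ := fun t => ∫ s in (0:ℝ)..t, u s
       let θ : ℝ → ℝ := fun t => π/2 + ∫ s in (0:ℝ)..t, κ s
       (∫ t in (0:ℝ)..T, Real.cos (θ t)) = x₁ ∧
       (∫ t in (0:ℝ)..T, Real.sin (θ t)) = y₁ ∧
       (∃ k : ℤ, θ T = θ₁ + 2*π*(k:ℝ)) ∧
       κ T = 0) := by
  obtain ⟨c, hc, k, hk⟩ := exists_mem_Ico_add_eq_add_two_pi_mul (π / 2) θ₁
  obtain ⟨a₀, ha₀, hza₀⟩ := exists_mem_Icc_cexp_mul_I_mul_eq_norm (x₁ + y₁ * I)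
  have hsub : Icc a₀ (a₀ + π) ⊆ Icc 0 (3 * π) := Icc_subset_Icc ha₀.1 (by linarith [ha₀.2])
  obtain ⟨a, ha, L, hL, hzL⟩ := exists_eq_add_mul_cexp_of_norm_lt
    (continuous_turnsDisplacement σ c).continuousOn
    (fun a ha => (norm_turnsDisplacement_lt hσ (hsub ha) hc.2.le).trans_le
      (by rwa [Complex.norm_add_mul_I])) hza₀
  obtain ⟨ha0, ha3⟩ := hsub ha
  obtain ⟨hpos, hθ, hκ⟩ := refEndpoint_of_turnLength hσ ha0 hc.1 hL rfl rfl rfl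
  rw [← hzL, ← Complex.mk_eq_add_mul_I, ← Complex.mk_eq_add_mul_I, Complex.mk.injEq] at hpos
  obtain ⟨hx, hy⟩ := hpos
  refine ⟨_, _, _, ⟨turnLength_nonneg σ a, turnLength_mono hσ ha3⟩,
    ⟨turnLength_nonneg σ (a + c), turnLength_mono hσ (by linarith [hc.2])⟩,
    le_add_of_nonneg_right hL, ?_⟩
  exact ⟨hx, hy, ⟨k, hθ.trans hk⟩, hκ⟩

end
end

section
/- Suppose ψ : ℝ → ℝ is nonnegative with ψ(r) ≥ C₀|r|^p for all |r| ≥ R₀, where p>1 and C₀,R₀>0, and let q satisfy 1/p+1/q=1. Let u be a measurable function on an interval [t₁,t₂] with ∫_{t₁}^{t₂} ψ(u(τ)) dτ ≤ Γ, and let κ(s) = κ(t₁) + ∫_{t₁}^{s} u(τ) dτ. Then for all s₁ ≤ s₂ in [t₁,t₂]: |κ(s₂)−κ(s₁)| ≤ (Γ/C₀)^{1/p} |s₂−s₁|^{1/q} + R₀|s₂−s₁|. -/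
open MeasureTheory Real Set

/-! Pointwise, `|u| ≤ (ψ(u)/C₀)^(1/p) + R₀`: the growth hypothesis bounds the large values of `u`
and the small ones are below `R₀`. Integrating over `[s₁, s₂]`, Hölder's inequality against the
constant `1` bounds the integral of the first term, whose `p`-th power is `ψ(u)/C₀`, by
`(Γ/C₀)^(1/p) (s₂ - s₁)^(1/q)`. -/

theorem abs_le_rpow_div_add_of_growth {x y C₀ R₀ p : ℝ} (hC₀ : 0 < C₀) (hR₀ : 0 ≤ R₀)
    (hp : 0 < p) (hy : 0 ≤ y) (hgrowth : R₀ ≤ |x| → C₀ * |x| ^ p ≤ y) :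
    |x| ≤ (y / C₀) ^ (1 / p) + R₀ := by
  rcases le_or_gt R₀ |x| with hx | hx
  · have : |x| ≤ (y / C₀) ^ (1 / p) := by
      rw [← rpow_le_rpow_iff (abs_nonneg x) (by positivity) hp, one_div,
        rpow_inv_rpow (by positivity) hp.ne', le_div_iff₀' hC₀]
      exact hgrowth hx
    linarith
  · linarith [rpow_nonneg (div_nonneg hy hC₀.le) (1 / p)]

section

variable {α : Type*} [MeasurableSpace α] {μ : Measure α}

theorem memLp_rpow_one_div {F : α → ℝ} {p : ℝ} (hp : 0 < p) (hF : Integrable F μ)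
    (hF₀ : 0 ≤ᵐ[μ] F) : MemLp (fun x => F x ^ (1 / p)) (ENNReal.ofReal p) μ := by
  rw [← integrable_norm_rpow_iff (hF.aemeasurable.pow_const _).aestronglyMeasurable
    (by simpa using hp) ENNReal.ofReal_ne_top, ENNReal.toReal_ofReal hp.le]
  refine hF.congr ?_
  filter_upwards [hF₀] with x hx
  rw [norm_of_nonneg (rpow_nonneg hx _), one_div, rpow_inv_rpow hx hp.ne']

variable [IsFiniteMeasure μ]

theorem integral_le_integral_rpow_mul_measureReal_univ_rpow {p q : ℝ} (hpq : p.HolderConjugate q)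
    {f : α → ℝ} (hf₀ : 0 ≤ᵐ[μ] f) (hf : MemLp f (ENNReal.ofReal p) μ) :
    ∫ x, f x ∂μ ≤ (∫ x, f x ^ p ∂μ) ^ (1 / p) * μ.real univ ^ (1 / q) := by
  simpa using integral_mul_le_Lp_mul_Lq_of_nonneg hpq hf₀ (ae_of_all _ fun _ => zero_le_one)
    hf (memLp_const (1 : ℝ))

variable {ψ : ℝ → ℝ} {u : α → ℝ} {p C₀ R₀ : ℝ}

theorem integrable_of_integrable_comp_of_growth (hψ : ∀ r, 0 ≤ ψ r) (hp : 1 ≤ p) (hC₀ : 0 < C₀)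
    (hR₀ : 0 ≤ R₀) (hgrowth : ∀ r, R₀ ≤ |r| → C₀ * |r| ^ p ≤ ψ r)
    (hu : AEStronglyMeasurable u μ) (hψu : Integrable (fun x => ψ (u x)) μ) :
    Integrable u μ := by
  have hmaj : Integrable (fun x => (ψ (u x) / C₀) ^ (1 / p)) μ :=
    (memLp_rpow_one_div (by positivity) (hψu.div_const C₀)
      (ae_of_all _ fun x => div_nonneg (hψ _) hC₀.le)).integrable (by simpa using hp)
  refine (hmaj.add (integrable_const R₀)).mono' hu (ae_of_all _ fun x => ?_)
  exact abs_le_rpow_div_add_of_growth hC₀ hR₀ (by positivity) (hψ _) (hgrowth _)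

theorem integral_abs_le_of_growth {q : ℝ} (hψ : ∀ r, 0 ≤ ψ r) (hpq : p.HolderConjugate q)
    (hC₀ : 0 < C₀) (hR₀ : 0 ≤ R₀) (hgrowth : ∀ r, R₀ ≤ |r| → C₀ * |r| ^ p ≤ ψ r)
    (hu : AEStronglyMeasurable u μ) (hψu : Integrable (fun x => ψ (u x)) μ) :
    ∫ x, |u x| ∂μ ≤
      ((∫ x, ψ (u x) ∂μ) / C₀) ^ (1 / p) * μ.real univ ^ (1 / q) + R₀ * μ.real univ := by
  set g : α → ℝ := fun x => (ψ (u x) / C₀) ^ (1 / p)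
  have hg₀ : 0 ≤ᵐ[μ] g := ae_of_all _ fun x => rpow_nonneg (div_nonneg (hψ _) hC₀.le) _
  have hg : MemLp g (ENNReal.ofReal p) μ :=
    memLp_rpow_one_div hpq.pos (hψu.div_const C₀) (ae_of_all _ fun x => div_nonneg (hψ _) hC₀.le)
  have hgp : ∫ x, g x ^ p ∂μ = (∫ x, ψ (u x) ∂μ) / C₀ := by
    rw [← integral_div]
    refine integral_congr_ae (ae_of_all _ fun x => ?_)
    simp only [g, one_div]
    exact rpow_inv_rpow (div_nonneg (hψ _) hC₀.le) hpq.ne_zero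
  have hgint : Integrable g μ := hg.integrable (by simpa using hpq.lt.le)
  calc ∫ x, |u x| ∂μ ≤ ∫ x, (g x + R₀) ∂μ :=
        integral_mono (integrable_of_integrable_comp_of_growth hψ hpq.lt.le hC₀ hR₀ hgrowth
          hu hψu).abs (hgint.add (integrable_const R₀))
          fun x => abs_le_rpow_div_add_of_growth hC₀ hR₀ hpq.pos (hψ _) (hgrowth _)
    _ = ∫ x, g x ∂μ + R₀ * μ.real univ := by
        rw [integral_add hgint (integrable_const R₀), integral_const, smul_eq_mul, mul_comm]
    _ ≤ _ := by
        grw [integral_le_integral_rpow_mul_measureReal_univ_rpow hpq hg₀ hg, hgp]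

end

theorem kappa_uniform_continuity_general
    (ψ : ℝ → ℝ) (p q C₀ R₀ Γ : ℝ)
    (hψnonneg : ∀ r, 0 ≤ ψ r)
    (hp : 1 < p) (hC₀ : 0 < C₀) (hR₀ : 0 < R₀)
    (hgrowth : ∀ r : ℝ, R₀ ≤ |r| → C₀ * |r| ^ p ≤ ψ r)
    (hq : 1/p + 1/q = 1)
    (t₁ t₂ : ℝ)
    (u κ : ℝ → ℝ) (hu : Measurable u)
    (hint : IntegrableOn (fun τ => ψ (u τ)) (Set.Icc t₁ t₂))
    (hΓ : (∫ τ in t₁..t₂, ψ (u τ)) ≤ Γ)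
    (hκ : ∀ s ∈ Set.Icc t₁ t₂, κ s = κ t₁ + ∫ τ in t₁..s, u τ) :
    ∀ s₁ s₂ : ℝ, t₁ ≤ s₁ → s₁ ≤ s₂ → s₂ ≤ t₂ →
      |κ s₂ - κ s₁| ≤ (Γ/C₀) ^ (1/p) * (s₂ - s₁) ^ (1/q) + R₀ * (s₂ - s₁) := by
  intro s₁ s₂ hs₁ hle hs₂
  have hpq : p.HolderConjugate q := holderConjugate_iff.mpr ⟨hp, by simpa [one_div] using hq⟩
  have hu_int : IntegrableOn u (Icc t₁ t₂) :=
    integrable_of_integrable_comp_of_growth hψnonneg hp.le hC₀ hR₀.le hgrowth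
      hu.aestronglyMeasurable hint
  have hu_ii : ∀ s ∈ Icc t₁ t₂, IntervalIntegrable u volume t₁ s := fun s hs =>
    (hu_int.mono_set (uIcc_subset_Icc (left_mem_Icc.2 (hs.1.trans hs.2)) hs)).intervalIntegrable
  have hs₁_mem : s₁ ∈ Icc t₁ t₂ := ⟨hs₁, hle.trans hs₂⟩
  have hs₂_mem : s₂ ∈ Icc t₁ t₂ := ⟨hs₁.trans hle, hs₂⟩
  have hκ_sub : κ s₂ - κ s₁ = ∫ τ in s₁..s₂, u τ := by
    rw [hκ s₂ hs₂_mem, hκ s₁ hs₁_mem, add_sub_add_left_eq_sub,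
      intervalIntegral.integral_interval_sub_left (hu_ii s₂ hs₂_mem) (hu_ii s₁ hs₁_mem)]
  have hsub : Ioc s₁ s₂ ⊆ Icc t₁ t₂ := Ioc_subset_Icc_self.trans (Icc_subset_Icc hs₁ hs₂)
  have hψ_le : ∫ τ in Ioc s₁ s₂, ψ (u τ) ≤ Γ := by
    rw [intervalIntegral.integral_of_le (hs₁.trans (hle.trans hs₂)),
      ← integral_Icc_eq_integral_Ioc] at hΓ
    exact (setIntegral_mono_set hint (ae_of_all _ fun _ => hψnonneg _) hsub.eventuallyLE).trans hΓ
  calc |κ s₂ - κ s₁| ≤ ∫ τ in Ioc s₁ s₂, |u τ| := by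
        rw [hκ_sub, ← intervalIntegral.integral_of_le hle]
        exact intervalIntegral.abs_integral_le_integral_abs hle
    _ ≤ _ := integral_abs_le_of_growth hψnonneg hpq hC₀ hR₀.le hgrowth hu.aestronglyMeasurable
          (hint.mono_set hsub)
    _ ≤ _ := by
        rw [measureReal_restrict_apply_univ, volume_real_Ioc_of_le hle]
        have : 0 ≤ ∫ τ in Ioc s₁ s₂, ψ (u τ) := integral_nonneg fun _ => hψnonneg _
        gcongr

/-- Hölder-type uniform continuity estimate for
`κ(s) = κ(t₁) + ∫_{t₁}^s u`, given `∫ ψ(u) ≤ Γ` and the growth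
hypothesis (H3) `ψ(r) ≥ C₀|r|^p` for `|r| ≥ R₀`. -/
theorem kappa_uniform_continuity
    (ψ : ℝ → ℝ) (p q C₀ R₀ Γ : ℝ)
    (hψnonneg : ∀ r, 0 ≤ ψ r)
    (hp : 1 < p) (hC₀ : 0 < C₀) (hR₀ : 0 < R₀)
    (hgrowth : ∀ r : ℝ, R₀ ≤ |r| → C₀ * |r| ^ p ≤ ψ r)
    (hq : 1/p + 1/q = 1)
    (t₁ t₂ : ℝ) (ht : t₁ ≤ t₂)
    (u κ : ℝ → ℝ) (hu : Measurable u)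
    (hint : IntegrableOn (fun τ => ψ (u τ)) (Set.Icc t₁ t₂))
    (hΓ : (∫ τ in t₁..t₂, ψ (u τ)) ≤ Γ)
    (hκ : ∀ s ∈ Set.Icc t₁ t₂, κ s = κ t₁ + ∫ τ in t₁..s, u τ) :
    ∀ s₁ s₂ : ℝ, t₁ ≤ s₁ → s₁ ≤ s₂ → s₂ ≤ t₂ →
      |κ s₂ - κ s₁| ≤ (Γ/C₀) ^ (1/p) * (s₂ - s₁) ^ (1/q) + R₀ * (s₂ - s₁) :=
  kappa_uniform_continuity_general ψ p q C₀ R₀ Γ hψnonneg hp hC₀ hR₀ hgrowth hq t₁ t₂ u κ hu hint hΓ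
    hκ
end

section
/- For every natural number m, setting λ_m = 4^{−m} and μ_m = 4^{−m(m+1)/2}, the following holds: for every t₁ < t₂ in ℝ, every C > 0 and every function f ∈ C^m([t₁,t₂]) satisfying |f^{(m)}(t)| > C for all t ∈ [t₁,t₂], there exists a subinterval of [t₁,t₂] of length λ_m (t₂−t₁) on which |f(t)| > μ_m C (t₂−t₁)^m. -/
/-!
Induction on `m`, applied to `f'`. If `|f'| > D ≥ 0` on `[a, a + 4L]`, the mean value theorem gives
`|f t - f t₀| > D (t - t₀)` for `t₀ < t` there. Either `|f| > D L` already on `[a, a + L]`, or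
`|f t₀| ≤ D L` at some `t₀ ≤ a + L`, and then `|f| > 2 D L - D L` on `[a + 3L, a + 4L]`.
Each step quarters the length of the interval and multiplies the bound by the new length.
-/

open Set

theorem mul_sub_lt_abs_sub_of_lt_abs_deriv {f f' : ℝ → ℝ} {s : Set ℝ} {a b D : ℝ} (hab : a < b)
    (hs : Icc a b ⊆ s) (hf : ∀ x ∈ Icc a b, HasDerivWithinAt f (f' x) s x)
    (hD : ∀ x ∈ Icc a b, D < |f' x|) : D * (b - a) < |f b - f a| := by
  have hcont : ContinuousOn f (Icc a b) := fun x hx => ((hf x hx).mono hs).continuousWithinAt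
  have hderiv : ∀ x ∈ Ioo a b, HasDerivAt f (f' x) x := fun x hx =>
    ((hf x (Ioo_subset_Icc_self hx)).mono hs).hasDerivAt (Icc_mem_nhds hx.1 hx.2)
  obtain ⟨c, hc, hslope⟩ := exists_hasDerivAt_eq_slope f f' hab hcont hderiv
  have hba : 0 < b - a := sub_pos.mpr hab
  calc D * (b - a) < |f' c| * (b - a) :=
        mul_lt_mul_of_pos_right (hD c (Ioo_subset_Icc_self hc)) hba
    _ = |f b - f a| := by rw [hslope, abs_div, abs_of_pos hba, div_mul_cancel₀ _ hba.ne']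

theorem exists_Icc_lt_abs_of_lt_abs_deriv {f f' : ℝ → ℝ} {s : Set ℝ} {a L D : ℝ} (hL : 0 < L)
    (hD : 0 ≤ D) (hs : Icc a (a + 4 * L) ⊆ s)
    (hf : ∀ x ∈ Icc a (a + 4 * L), HasDerivWithinAt f (f' x) s x)
    (hf' : ∀ x ∈ Icc a (a + 4 * L), D < |f' x|) :
    ∃ b, a ≤ b ∧ b + L ≤ a + 4 * L ∧ ∀ t ∈ Icc b (b + L), D * L < |f t| := by
  by_cases hleft : ∀ t ∈ Icc a (a + L), D * L < |f t|
  · exact ⟨a, le_rfl, by linarith, hleft⟩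
  push Not at hleft
  obtain ⟨t₀, ⟨ht₀a, ht₀L⟩, hft₀⟩ := hleft
  refine ⟨a + 3 * L, by linarith, by linarith, fun t ⟨hta, htb⟩ => ?_⟩
  have hsub : Icc t₀ t ⊆ Icc a (a + 4 * L) := Icc_subset_Icc ht₀a (by linarith)
  have hgrowth : D * (t - t₀) < |f t - f t₀| :=
    mul_sub_lt_abs_sub_of_lt_abs_deriv (by linarith) (hsub.trans hs)
      (fun x hx => hf x (hsub hx)) (fun x hx => hf' x (hsub hx))
  have hfar : D * (2 * L) ≤ D * (t - t₀) := mul_le_mul_of_nonneg_left (by linarith) hD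
  linarith [abs_sub (f t) (f t₀)]

theorem quarter_pow_triangle_succ (m : ℕ) (C T : ℝ) :
    ((1 : ℝ) / 4) ^ ((m + 1) * (m + 1 + 1) / 2) * C * T ^ (m + 1) =
      ((1 : ℝ) / 4) ^ (m * (m + 1) / 2) * C * T ^ m * (((1 : ℝ) / 4) ^ (m + 1) * T) := by
  have htri : (m + 1) * (m + 1 + 1) / 2 = m * (m + 1) / 2 + (m + 1) := by
    rw [show (m + 1) * (m + 1 + 1) = m * (m + 1) + (m + 1) * 2 by ring,
      Nat.add_mul_div_right _ _ two_pos]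
  rw [htri, pow_add, pow_succ T]
  ring

/-- if `|f^(m)| > C` on `[t₁,t₂]` then there is a subinterval of
length `4^{-m}(t₂-t₁)` on which `|f| > 4^{-m(m+1)/2} C (t₂-t₁)^m`. -/
theorem lower_bound_on_subinterval (m : ℕ) :
    ∀ t₁ t₂ : ℝ, t₁ < t₂ → ∀ C : ℝ, 0 < C → ∀ f : ℝ → ℝ,
      ContDiffOn ℝ m f (Set.Icc t₁ t₂) →
      (∀ t ∈ Set.Icc t₁ t₂, C < |iteratedDerivWithin m f (Set.Icc t₁ t₂) t|) →
      ∃ a : ℝ, t₁ ≤ a ∧ a + ((1:ℝ)/4)^m * (t₂ - t₁) ≤ t₂ ∧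
        ∀ t ∈ Set.Icc a (a + ((1:ℝ)/4)^m * (t₂ - t₁)),
          ((1:ℝ)/4)^(m*(m+1)/2) * C * (t₂ - t₁)^m < |f t| := by
  induction m with
  | zero =>
    intro t₁ t₂ _ C _ f _ hC
    exact ⟨t₁, le_rfl, by simp, fun t ht => by simpa using hC t (by simpa using ht)⟩
  | succ m ih =>
    intro t₁ t₂ ht C hC f hf hfC
    set s := Icc t₁ t₂
    have hdiff : DifferentiableOn ℝ f s := hf.differentiableOn (by simp)
    have hf' : ContDiffOn ℝ m (derivWithin f s) s :=
      hf.derivWithin (uniqueDiffOn_Icc ht) (by push_cast; rfl)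
    have hf'C : ∀ t ∈ s, C < |iteratedDerivWithin m (derivWithin f s) s t| := fun t hts => by
      simpa only [iteratedDerivWithin_succ'] using hfC t hts
    obtain ⟨a, ht₁a, hat₂, hD⟩ := ih t₁ t₂ ht C hC _ hf' hf'C
    set L := ((1 : ℝ) / 4) ^ (m + 1) * (t₂ - t₁)
    have h4L : ((1 : ℝ) / 4) ^ m * (t₂ - t₁) = 4 * L := by simp only [L, pow_succ]; ring
    rw [h4L] at hat₂ hD
    have hsub : Icc a (a + 4 * L) ⊆ s := Icc_subset_Icc ht₁a hat₂
    obtain ⟨b, hab, hbL, hfb⟩ := exists_Icc_lt_abs_of_lt_abs_deriv (by positivity)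
      (by have := sub_pos.mpr ht; positivity) hsub
      (fun x hx => (hdiff x (hsub hx)).hasDerivWithinAt) hD
    exact ⟨b, ht₁a.trans hab, hbL.trans hat₂, by simpa only [quarter_pow_triangle_succ] using hfb⟩
end

section
/- Every abnormal extremal of the problem is trivial; precisely: let θ, κ : [0,T] → ℝ be continuous with θ' = κ, let p₁, p₂ be real constants and p₃, p₄ : [0,T] → ℝ absolutely continuous functions satisfying p₃' = p₁ sin θ − p₂ cos θ and p₄' = −p₃ a.e., suppose that for almost every t the function v ↦ p₁ cos θ(t) + p₂ sin θ(t) + p₃(t)κ(t) + p₄(t)v attains a finite maximum over v ∈ ℝ equal to 0 (the PMP maximization and zero-Hamiltonian conditions with ν=0). Then p₁ = p₂ = 0 and p₃ ≡ p₄ ≡ 0 on [0,T]. -/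
open MeasureTheory Real Set

/-!
With `ν = 0` the Hamiltonian is affine in the control `u`, so it is bounded above only
if `p₄ = 0` a.e.; by continuity `p₄ ≡ 0`. Then `p₃ = -p₄' ≡ 0` and
`p₁ sin θ - p₂ cos θ = p₃' ≡ 0`, while the zero-Hamiltonian condition now reads
`p₁ cos θ + p₂ sin θ ≡ 0`. These two equations say that the vector `(p₁, p₂)` rotated
by `θ` vanishes, so `p₁ = p₂ = 0`.
-/

lemma eq_zero_of_forall_add_mul_le_zero {c p : ℝ} (h : ∀ v : ℝ, c + p * v ≤ 0) : p = 0 := by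
  by_contra hp
  have := h ((1 - c) / p)
  rw [mul_div_cancel₀ _ hp] at this
  linarith

lemma eq_zero_of_mul_cos_add_mul_sin_eq_zero {p₁ p₂ x : ℝ}
    (hcos : p₁ * cos x + p₂ * sin x = 0) (hsin : p₁ * sin x - p₂ * cos x = 0) :
    p₁ = 0 ∧ p₂ = 0 :=
  ⟨by linear_combination cos x * hcos + sin x * hsin - p₁ * sin_sq_add_cos_sq x,
    by linear_combination sin x * hcos - cos x * hsin - p₂ * sin_sq_add_cos_sq x⟩

lemma continuousOn_of_eq_add_integral {a b c : ℝ} (hab : a ≤ b) {f g : ℝ → ℝ}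
    (hf : ContinuousOn f (Icc a b)) (hg : ∀ t ∈ Icc a b, g t = c + ∫ s in a..t, f s) :
    ContinuousOn g (Icc a b) := by
  have hprim : ContinuousOn (fun t => ∫ s in a..t, f s) (uIcc a b) :=
    intervalIntegral.continuousOn_primitive_interval <| by
      rw [uIcc_of_le hab]; exact hf.integrableOn_Icc
  rw [uIcc_of_le hab] at hprim
  exact (continuousOn_const.add hprim).congr hg

lemma eqOn_zero_of_integral_eq_zero {a b : ℝ} (hab : a < b) {f : ℝ → ℝ}
    (hf : ContinuousOn f (Icc a b)) (h : ∀ t ∈ Icc a b, ∫ s in a..t, f s = 0) :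
    EqOn f 0 (Icc a b) := by
  have hIoo : EqOn f 0 (Ioo a b) := fun t ht => by
    have hint : IntervalIntegrable f volume a t :=
      (hf.mono (Icc_subset_Icc_right ht.2.le)).intervalIntegrable_of_Icc ht.1.le
    have hderiv : HasDerivAt (fun u => ∫ s in a..u, f s) (f t) t :=
      intervalIntegral.integral_hasDerivAt_right hint
        ((hf.mono Ioo_subset_Icc_self).stronglyMeasurableAtFilter isOpen_Ioo t ht)
        (hf.continuousAt (Icc_mem_nhds ht.1 ht.2))
    have hconst : HasDerivAt (fun u => ∫ s in a..u, f s) 0 t :=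
      (hasDerivAt_const t 0).congr_of_eventuallyEq <|
        Filter.mem_of_superset (Ioo_mem_nhds ht.1 ht.2) fun u hu => h u (Ioo_subset_Icc_self hu)
    exact hderiv.unique hconst
  exact hIoo.of_subset_closure hf continuousOn_const Ioo_subset_Icc_self
    (closure_Ioo hab.ne).symm.subset

theorem abnormal_extremals_are_trivial_general
    (T : ℝ) (hT : 0 < T)
    (θ κ p₃ p₄ : ℝ → ℝ) (p₁ p₂ : ℝ)
    (hθc : ContinuousOn θ (Set.Icc 0 T))
    (hp₃ : ∀ t ∈ Set.Icc (0:ℝ) T,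
      p₃ t = p₃ 0 + ∫ s in (0:ℝ)..t, (p₁ * Real.sin (θ s) - p₂ * Real.cos (θ s)))
    (hp₄ : ∀ t ∈ Set.Icc (0:ℝ) T,
      p₄ t = p₄ 0 + ∫ s in (0:ℝ)..t, (-(p₃ s)))
    (hmax : ∀ᵐ t ∂(volume.restrict (Set.Icc (0:ℝ) T)),
      (∀ v : ℝ, p₁ * Real.cos (θ t) + p₂ * Real.sin (θ t)
          + p₃ t * κ t + p₄ t * v ≤ 0) ∧
      (∃ v : ℝ, p₁ * Real.cos (θ t) + p₂ * Real.sin (θ t)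
          + p₃ t * κ t + p₄ t * v = 0)) :
    p₁ = 0 ∧ p₂ = 0 ∧ ∀ t ∈ Set.Icc (0:ℝ) T, p₃ t = 0 ∧ p₄ t = 0 := by
  have h0 : (0:ℝ) ∈ Icc 0 T := left_mem_Icc.mpr hT.le
  have hp₃c : ContinuousOn p₃ (Icc 0 T) :=
    continuousOn_of_eq_add_integral hT.le (by fun_prop) hp₃
  have hp₄c : ContinuousOn p₄ (Icc 0 T) :=
    continuousOn_of_eq_add_integral hT.le hp₃c.neg hp₄
  have hp₄0 : EqOn p₄ 0 (Icc 0 T) :=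
    Measure.eqOn_Icc_of_ae_eq volume hT.ne
      (hmax.mono fun t ht => eq_zero_of_forall_add_mul_le_zero ht.1) hp₄c continuousOn_const
  have hp₃0 : EqOn p₃ 0 (Icc 0 T) := fun t ht => neg_eq_zero.mp <|
    eqOn_zero_of_integral_eq_zero (f := fun s => -p₃ s) hT hp₃c.neg
      (fun u hu => by
        linarith [hp₄ u hu, show p₄ u = 0 from hp₄0 hu, show p₄ 0 = 0 from hp₄0 h0]) ht
  have hsin : EqOn (fun t => p₁ * sin (θ t) - p₂ * cos (θ t)) 0 (Icc 0 T) :=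
    eqOn_zero_of_integral_eq_zero hT (by fun_prop) fun t ht => by
      linarith [hp₃ t ht, show p₃ t = 0 from hp₃0 ht, show p₃ 0 = 0 from hp₃0 h0]
  have hcos : EqOn (fun t => p₁ * cos (θ t) + p₂ * sin (θ t)) 0 (Icc 0 T) := by
    refine Measure.eqOn_Icc_of_ae_eq volume hT.ne ?_ (by fun_prop) continuousOn_const
    filter_upwards [hmax, ae_restrict_mem measurableSet_Icc] with t ⟨_, v, hv⟩ ht
    simpa [hp₃0 ht, hp₄0 ht] using hv
  obtain ⟨hp₁, hp₂⟩ := eq_zero_of_mul_cos_add_mul_sin_eq_zero (hcos h0) (hsin h0)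
  exact ⟨hp₁, hp₂, fun t ht => ⟨hp₃0 ht, hp₄0 ht⟩⟩

/-- every abnormal extremal is trivial: if the abnormal
Hamiltonian `v ↦ p₁cos θ + p₂sin θ + p₃κ + p₄v` attains a finite maximum over
`v ∈ ℝ` equal to `0` a.e., then `p₁ = p₂ = 0` and `p₃ ≡ p₄ ≡ 0`. -/
theorem abnormal_extremals_are_trivial
    (T : ℝ) (hT : 0 < T)
    (θ κ p₃ p₄ : ℝ → ℝ) (p₁ p₂ : ℝ)
    (hθc : ContinuousOn θ (Set.Icc 0 T))
    (hκc : ContinuousOn κ (Set.Icc 0 T))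
    (hθ : ∀ t ∈ Set.Icc (0:ℝ) T, θ t = θ 0 + ∫ s in (0:ℝ)..t, κ s)
    (hp₃ : ∀ t ∈ Set.Icc (0:ℝ) T,
      p₃ t = p₃ 0 + ∫ s in (0:ℝ)..t, (p₁ * Real.sin (θ s) - p₂ * Real.cos (θ s)))
    (hp₄ : ∀ t ∈ Set.Icc (0:ℝ) T,
      p₄ t = p₄ 0 + ∫ s in (0:ℝ)..t, (-(p₃ s)))
    (hmax : ∀ᵐ t ∂(volume.restrict (Set.Icc (0:ℝ) T)),
      (∀ v : ℝ, p₁ * Real.cos (θ t) + p₂ * Real.sin (θ t)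
          + p₃ t * κ t + p₄ t * v ≤ 0) ∧
      (∃ v : ℝ, p₁ * Real.cos (θ t) + p₂ * Real.sin (θ t)
          + p₃ t * κ t + p₄ t * v = 0)) :
    p₁ = 0 ∧ p₂ = 0 ∧ ∀ t ∈ Set.Icc (0:ℝ) T, p₃ t = 0 ∧ p₄ t = 0 :=
  abnormal_extremals_are_trivial_general T hT θ κ p₃ p₄ p₁ p₂ hθc hp₃ hp₄ hmax
end

section
/- Suppose ψ : ℝ → ℝ is C¹, strictly convex, even, with ψ(0)=0, and ψ(r) ≥ C₀|r|^p for |r| ≥ R₀ with p>1, C₀,R₀>0. Then the map η ↦ ψ'(η)η − ψ(η) is strictly increasing on [0,∞), strictly decreasing on (−∞,0], and tends to +∞ as |η| → ∞. Consequently, for every α ∈ [0,2π) with sin α < 1, the equation cos(π/2−α) + z·(ψ')^{−1}(z) − 1 − ψ((ψ')^{−1}(z)) = 0 has exactly one positive solution z and exactly one negative solution z. -/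
open Real Set Filter

/-!
Write `F η = ψ'(η) η - ψ(η)`. For `0 ≤ a < b` the strict tangent-line inequality at `b` gives
`F b - F a > a (ψ'(b) - ψ'(a)) ≥ 0`, and `F` is even because `ψ` is. Tangent lines also give
`η ψ'(η) ≥ ψ(η) - ψ(0)` and `F η ≥ ψ'(η) - ψ(1)`, so the superlinear growth of `ψ` drives both
`ψ'` and `F` to `+∞`. Hence `ψ'` is an odd increasing bijection of `ℝ`, and the sign-preserving
substitution `z = ψ'(η)` turns the equation into `F η = 1 - sin α`, a value above `F 0 = 0` that
`F` attains exactly once on each open half-line.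
-/

noncomputable def legendreMap (ψ : ℝ → ℝ) (η : ℝ) : ℝ := deriv ψ η * η - ψ η

section Tangent

variable {S : Set ℝ} {ψ : ℝ → ℝ} {x y : ℝ}

theorem ConvexOn.add_deriv_mul_sub_le (hconv : ConvexOn ℝ S ψ) (hx : x ∈ S) (hy : y ∈ S)
    (hdiff : DifferentiableAt ℝ ψ x) : ψ x + deriv ψ x * (y - x) ≤ ψ y := by
  rcases lt_trichotomy x y with hxy | rfl | hyx
  · have := hconv.deriv_le_slope hx hy hxy hdiff
    rw [slope_def_field, le_div_iff₀ (sub_pos.2 hxy)] at this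
    linarith
  · simp
  · have := hconv.slope_le_deriv hy hx hyx hdiff
    rw [slope_def_field, div_le_iff₀ (sub_pos.2 hyx)] at this
    linarith

theorem StrictConvexOn.add_deriv_mul_sub_lt (hconv : StrictConvexOn ℝ S ψ) (hx : x ∈ S)
    (hy : y ∈ S) (hxy : x ≠ y) (hdiff : DifferentiableAt ℝ ψ x) :
    ψ x + deriv ψ x * (y - x) < ψ y := by
  rcases hxy.lt_or_gt with hxy | hyx
  · have := hconv.deriv_lt_slope hx hy hxy hdiff
    rw [slope_def_field, lt_div_iff₀ (sub_pos.2 hxy)] at this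
    linarith
  · have := hconv.slope_lt_deriv hy hx hyx hdiff
    rw [slope_def_field, div_lt_iff₀ (sub_pos.2 hyx)] at this
    linarith

end Tangent

theorem Function.Even.deriv {𝕜 F : Type*} [NontriviallyNormedField 𝕜] [NormedAddCommGroup F]
    [NormedSpace 𝕜 F] {f : 𝕜 → F} (hf : f.Even) : (deriv f).Odd := by
  intro x
  have := deriv_comp_neg f x
  rw [funext hf] at this
  rw [this, neg_neg]

theorem Function.Even.tendsto_atBot {α : Type*} {f : ℝ → α} (hf : f.Even)
    {l : Filter α} (h : Tendsto f atTop l) : Tendsto f atBot l := by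
  simpa only [Function.comp_def, hf.eq] using h.comp tendsto_neg_atBot_atTop

theorem Function.Odd.tendsto_atBot_atBot {f : ℝ → ℝ} (hf : f.Odd) (h : Tendsto f atTop atTop) :
    Tendsto f atBot atBot := by
  simpa only [Function.comp_def, hf.eq, neg_neg] using
    tendsto_neg_atTop_atBot.comp (h.comp tendsto_neg_atBot_atTop)

section Legendre

variable {ψ : ℝ → ℝ}

theorem legendreMap_strictMonoOn_Ici (hconv : StrictConvexOn ℝ univ ψ)
    (hdiff : Differentiable ℝ ψ) : StrictMonoOn (legendreMap ψ) (Ici 0) := by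
  intro a ha b _ hab
  have htangent := hconv.add_deriv_mul_sub_lt (mem_univ b) (mem_univ a) hab.ne' (hdiff b)
  have hderiv := hconv.strictMonoOn_deriv (fun x _ => hdiff x) (mem_univ a) (mem_univ b) hab
  have : legendreMap ψ a + a * (deriv ψ b - deriv ψ a) < legendreMap ψ b := by
    unfold legendreMap
    linarith
  linarith [mul_nonneg (mem_Ici.1 ha) (sub_nonneg.2 hderiv.le)]

theorem legendreMap_strictAntiOn_Iic (hconv : StrictConvexOn ℝ univ ψ)
    (hdiff : Differentiable ℝ ψ) : StrictAntiOn (legendreMap ψ) (Iic 0) := by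
  intro a _ b hb hab
  have htangent := hconv.add_deriv_mul_sub_lt (mem_univ a) (mem_univ b) hab.ne (hdiff a)
  have hderiv := hconv.strictMonoOn_deriv (fun x _ => hdiff x) (mem_univ a) (mem_univ b) hab
  have : legendreMap ψ b - b * (deriv ψ b - deriv ψ a) < legendreMap ψ a := by
    unfold legendreMap
    linarith
  linarith [mul_nonpos_of_nonpos_of_nonneg (mem_Iic.1 hb) (sub_nonneg.2 hderiv.le)]

theorem tendsto_div_self_atTop_of_rpow_le {p C₀ R₀ : ℝ} (hp : 1 < p) (hC₀ : 0 < C₀)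
    (hgrowth : ∀ r : ℝ, R₀ ≤ |r| → C₀ * |r| ^ p ≤ ψ r) :
    Tendsto (fun η => ψ η / η) atTop atTop := by
  refine tendsto_atTop_mono' _ ?_ ((tendsto_rpow_atTop (sub_pos.2 hp)).const_mul_atTop hC₀)
  filter_upwards [eventually_ge_atTop R₀, eventually_gt_atTop 0] with η hR hη
  rw [le_div_iff₀ hη, mul_assoc, ← rpow_add_one hη.ne', sub_add_cancel]
  simpa [abs_of_pos hη] using hgrowth η (by rwa [abs_of_pos hη])

theorem ConvexOn.tendsto_deriv_atTop (hconv : ConvexOn ℝ univ ψ) (hdiff : Differentiable ℝ ψ)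
    (h : Tendsto (fun η => ψ η / η) atTop atTop) : Tendsto (deriv ψ) atTop atTop := by
  have hψ0 : Tendsto (fun η => -ψ 0 / η) atTop (nhds 0) :=
    tendsto_const_nhds.div_atTop tendsto_id
  refine tendsto_atTop_mono' _ ?_ (h.atTop_add hψ0)
  filter_upwards [eventually_gt_atTop 0] with η hη
  have := hconv.add_deriv_mul_sub_le (mem_univ η) (mem_univ 0) (hdiff η)
  rw [← add_div, div_le_iff₀ hη]
  linarith

theorem ConvexOn.tendsto_legendreMap_atTop (hconv : ConvexOn ℝ univ ψ)
    (hdiff : Differentiable ℝ ψ) (h : Tendsto (deriv ψ) atTop atTop) :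
    Tendsto (legendreMap ψ) atTop atTop := by
  refine tendsto_atTop_mono (fun η => ?_) (tendsto_atTop_add_const_right _ (-ψ 1) h)
  have := hconv.add_deriv_mul_sub_le (mem_univ η) (mem_univ 1) (hdiff η)
  unfold legendreMap
  linarith

theorem Function.Even.legendreMap (heven : ψ.Even) : (legendreMap ψ).Even := by
  intro η
  unfold _root_.legendreMap
  rw [heven.deriv, heven]
  ring

end Legendre

section Roots

variable {f : ℝ → ℝ} {c : ℝ}

theorem existsUnique_pos_eq_of_strictMonoOn (hcont : Continuous f) (hc : f 0 < c)
    (hmono : StrictMonoOn f (Ici 0)) (htop : Tendsto f atTop atTop) : ∃! x, 0 < x ∧ f x = c := by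
  obtain ⟨b, hbc, hb⟩ := ((htop.eventually_ge_atTop c).and (eventually_ge_atTop 0)).exists
  obtain ⟨x, hx, hfx⟩ := intermediate_value_Icc hb hcont.continuousOn ⟨hc.le, hbc⟩
  have hx0 : 0 < x := hx.1.lt_of_ne (by rintro rfl; exact hc.ne hfx)
  exact ⟨x, ⟨hx0, hfx⟩, fun y ⟨hy, hfy⟩ => hmono.injOn hy.le hx0.le (hfy.trans hfx.symm)⟩

theorem existsUnique_neg_eq_of_strictAntiOn (hcont : Continuous f) (hc : f 0 < c)
    (hanti : StrictAntiOn f (Iic 0)) (hbot : Tendsto f atBot atTop) : ∃! x, x < 0 ∧ f x = c := by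
  have hmono : StrictMonoOn (fun x => f (-x)) (Ici 0) := fun a ha b hb hab =>
    hanti (mem_Iic.2 (neg_nonpos.2 hb)) (mem_Iic.2 (neg_nonpos.2 ha)) (neg_lt_neg hab)
  refine ((Equiv.neg ℝ).existsUnique_congr fun x => ?_).1
    (existsUnique_pos_eq_of_strictMonoOn (hcont.comp continuous_neg) (by simpa using hc) hmono
      (hbot.comp tendsto_neg_atTop_atBot))
  simp

end Roots

theorem Function.Bijective.existsUnique_invFun_iff {α β : Type*} [Nonempty α] {g : α → β}
    (hg : Bijective g) (p : β → α → Prop) :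
    (∃! b, p b (invFun g b)) ↔ ∃! a, p (g a) a := by
  let e := Equiv.ofBijective g hg
  have : invFun g = e.symm :=
    funext fun b => hg.injective <| by
      rw [invFun_eq (hg.surjective b), Equiv.ofBijective_apply_symm_apply g hg]
  rw [this]
  exact (e.existsUnique_congr fun a => by simp [e]).symm

theorem legendre_map_monotone_and_unique_roots_general
    (ψ : ℝ → ℝ) (p C₀ R₀ : ℝ)
    (hC1 : ContDiff ℝ 1 ψ)
    (hconv : StrictConvexOn ℝ Set.univ ψ)
    (heven : ∀ r, ψ (-r) = ψ r)
    (h0 : ψ 0 = 0)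
    (hp : 1 < p) (hC₀ : 0 < C₀)
    (hgrowth : ∀ r : ℝ, R₀ ≤ |r| → C₀ * |r| ^ p ≤ ψ r) :
    StrictMonoOn (fun η : ℝ => deriv ψ η * η - ψ η) (Set.Ici 0) ∧
    StrictAntiOn (fun η : ℝ => deriv ψ η * η - ψ η) (Set.Iic 0) ∧
    Tendsto (fun η : ℝ => deriv ψ η * η - ψ η) atTop atTop ∧
    Tendsto (fun η : ℝ => deriv ψ η * η - ψ η) atBot atTop ∧
    (∀ α : ℝ, α ∈ Set.Ico 0 (2*π) → Real.sin α < 1 →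
      (∃! z : ℝ, 0 < z ∧
        Real.cos (π/2 - α) + z * Function.invFun (deriv ψ) z
          - 1 - ψ (Function.invFun (deriv ψ) z) = 0) ∧
      (∃! z : ℝ, z < 0 ∧
        Real.cos (π/2 - α) + z * Function.invFun (deriv ψ) z
          - 1 - ψ (Function.invFun (deriv ψ) z) = 0)) := by
  have hψ_even : ψ.Even := heven
  have hdiff : Differentiable ℝ ψ := hC1.differentiable one_ne_zero
  have hderiv_top := hconv.convexOn.tendsto_deriv_atTop hdiff
    (tendsto_div_self_atTop_of_rpow_le hp hC₀ hgrowth)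
  have hmono := legendreMap_strictMonoOn_Ici hconv hdiff
  have hanti := legendreMap_strictAntiOn_Iic hconv hdiff
  have htop := hconv.convexOn.tendsto_legendreMap_atTop hdiff hderiv_top
  have hbot := hψ_even.legendreMap.tendsto_atBot htop
  refine ⟨hmono, hanti, htop, hbot, fun α _ hsin => ?_⟩
  have hsm : StrictMono (deriv ψ) :=
    strictMonoOn_univ.1 (hconv.strictMonoOn_deriv fun x _ => hdiff x)
  have hbij : Function.Bijective (deriv ψ) := ⟨hsm.injective,
    (hC1.continuous_deriv le_rfl).surjective hderiv_top
      (hψ_even.deriv.tendsto_atBot_atBot hderiv_top)⟩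
  have hcont : Continuous (legendreMap ψ) :=
    ((hC1.continuous_deriv le_rfl).mul continuous_id).sub hC1.continuous
  have hc : legendreMap ψ 0 < 1 - sin α := by simp [legendreMap, h0, hsin]
  have hpos (η : ℝ) : 0 < deriv ψ η ↔ 0 < η := by
    simpa [hψ_even.deriv.map_zero] using hsm.lt_iff_lt (a := 0) (b := η)
  have hneg (η : ℝ) : deriv ψ η < 0 ↔ η < 0 := by
    simpa [hψ_even.deriv.map_zero] using hsm.lt_iff_lt (a := η) (b := 0)
  have hequation (η : ℝ) :
      sin α + deriv ψ η * η - 1 - ψ η = 0 ↔ legendreMap ψ η = 1 - sin α := by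
    unfold legendreMap
    constructor <;> intro <;> linarith
  rw [cos_pi_div_two_sub]
  constructor
  · refine (hbij.existsUnique_invFun_iff
      fun z η => 0 < z ∧ sin α + z * η - 1 - ψ η = 0).2 ?_
    exact (existsUnique_congr fun η => and_congr (hpos η).symm (hequation η).symm).1
      (existsUnique_pos_eq_of_strictMonoOn hcont hc hmono htop)
  · refine (hbij.existsUnique_invFun_iff
      fun z η => z < 0 ∧ sin α + z * η - 1 - ψ η = 0).2 ?_
    exact (existsUnique_congr fun η => and_congr (hneg η).symm (hequation η).symm).1
      (existsUnique_neg_eq_of_strictAntiOn hcont hc hanti hbot)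

/-- the map `η ↦ ψ'(η)η - ψ(η)` is strictly increasing on
`[0,∞)`, strictly decreasing on `(-∞,0]`, tends to `+∞` as `|η| → ∞`; hence
for `α ∈ [0,2π)` with `sin α < 1` the equation
`cos(π/2-α) + z(ψ')⁻¹(z) - 1 - ψ((ψ')⁻¹(z)) = 0` has exactly one positive and
exactly one negative solution. -/
theorem legendre_map_monotone_and_unique_roots
    (ψ : ℝ → ℝ) (p C₀ R₀ : ℝ)
    (hC1 : ContDiff ℝ 1 ψ)
    (hconv : StrictConvexOn ℝ Set.univ ψ)
    (heven : ∀ r, ψ (-r) = ψ r)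
    (h0 : ψ 0 = 0)
    (hp : 1 < p) (hC₀ : 0 < C₀) (hR₀ : 0 < R₀)
    (hgrowth : ∀ r : ℝ, R₀ ≤ |r| → C₀ * |r| ^ p ≤ ψ r) :
    StrictMonoOn (fun η : ℝ => deriv ψ η * η - ψ η) (Set.Ici 0) ∧
    StrictAntiOn (fun η : ℝ => deriv ψ η * η - ψ η) (Set.Iic 0) ∧
    Tendsto (fun η : ℝ => deriv ψ η * η - ψ η) atTop atTop ∧
    Tendsto (fun η : ℝ => deriv ψ η * η - ψ η) atBot atTop ∧
    (∀ α : ℝ, α ∈ Set.Ico 0 (2*π) → Real.sin α < 1 →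
      (∃! z : ℝ, 0 < z ∧
        Real.cos (π/2 - α) + z * Function.invFun (deriv ψ) z
          - 1 - ψ (Function.invFun (deriv ψ) z) = 0) ∧
      (∃! z : ℝ, z < 0 ∧
        Real.cos (π/2 - α) + z * Function.invFun (deriv ψ) z
          - 1 - ψ (Function.invFun (deriv ψ) z) = 0)) :=
  legendre_map_monotone_and_unique_roots_general ψ p C₀ R₀ hC1 hconv heven h0 hp hC₀ hgrowth
end

section
/- Let a ≥ 0 and b > 0 and consider the real 4×4 matrix J with rows (0,1,0,0), (0,0,0,1/b), (1,0,0,0), (0,a,−1,0) (the linearization matrix of the asymptotic adjoint system with b = ψ''(0) and a = φ''(0)). Then no eigenvalue of J is purely imaginary or zero, and J has exactly two eigenvalues (counted with algebraic multiplicity, as roots of its characteristic polynomial in ℂ) with strictly negative real part and exactly two with strictly positive real part. -/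
/-!
The characteristic polynomial of `J` is the even polynomial `λ⁴ - (a/b) λ² + 1/b`, so its roots come
in pairs `±u, ±v`. On the imaginary axis it takes the value `y⁴ + (a/b) y² + 1/b > 0` at `λ = i y`,
so no root has zero real part, and each pair contributes one stable and one unstable eigenvalue.
-/

open Matrix Complex Polynomial

theorem charpoly_linearization (a b : ℝ) :
    (!![0, 1, 0, 0; 0, 0, 0, 1/b; 1, 0, 0, 0; 0, a, -1, 0] : Matrix (Fin 4) (Fin 4) ℝ).charpoly
      = X ^ 4 - C (a / b) * X ^ 2 + C (1 / b) := by
  simp [Matrix.charpoly, det_succ_row_zero, Fin.sum_univ_succ, Fin.succAbove, charmatrix_apply,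
    diagonal_apply, div_eq_mul_inv, C_mul]
  ring

theorem exists_sq_add_sq_eq_and_sq_mul_sq_eq {K : Type*} [Field K] [IsAlgClosed K] (A B : K) :
    ∃ u v : K, u ^ 2 + v ^ 2 = A ∧ u ^ 2 * v ^ 2 = B := by
  have hdeg : (X ^ 2 - C A * X + C B).degree = 2 := by compute_degree!
  obtain ⟨s, hs⟩ := IsAlgClosed.exists_root _ (by rw [hdeg]; decide)
  obtain ⟨u, rfl⟩ := IsAlgClosed.exists_pow_nat_eq s two_pos
  obtain ⟨v, hv⟩ := IsAlgClosed.exists_pow_nat_eq (A - u ^ 2) two_pos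
  refine ⟨u, v, by rw [hv]; ring, ?_⟩
  simp only [IsRoot, eval_add, eval_sub, eval_mul, eval_pow, eval_X, eval_C] at hs
  linear_combination u ^ 2 * hv - hs

theorem roots_X_sq_sub_C_sq {R : Type*} [CommRing R] [IsDomain R] (u : R) :
    (X ^ 2 - C (u ^ 2)).roots = {u, -u} := by
  have hfac : (X ^ 2 - C (u ^ 2) : R[X]) = (X - C u) * (X - C (-u)) := by
    simp only [C_neg, C_pow]
    ring
  rw [hfac, roots_mul (mul_ne_zero (X_sub_C_ne_zero u) (X_sub_C_ne_zero (-u))), roots_X_sub_C,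
    roots_X_sub_C]
  rfl

theorem roots_biquadratic {R : Type*} [CommRing R] [IsDomain R] (u v : R) :
    (X ^ 4 - C (u ^ 2 + v ^ 2) * X ^ 2 + C (u ^ 2 * v ^ 2)).roots = {u, -u} + {v, -v} := by
  have hfac : (X ^ 4 - C (u ^ 2 + v ^ 2) * X ^ 2 + C (u ^ 2 * v ^ 2) : R[X])
      = (X ^ 2 - C (u ^ 2)) * (X ^ 2 - C (v ^ 2)) := by
    simp only [C_add, C_mul]
    ring
  rw [hfac, roots_mul (mul_ne_zero (X_pow_sub_C_ne_zero two_pos _) (X_pow_sub_C_ne_zero two_pos _)),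
    roots_X_sq_sub_C_sq, roots_X_sq_sub_C_sq]

theorem re_ne_zero_of_biquadratic_eq_zero {A B : ℝ} (hA : 0 ≤ A) (hB : 0 < B) {z : ℂ}
    (hz : z ^ 4 - A * z ^ 2 + B = 0) : z.re ≠ 0 := by
  intro hre
  have hzI : z = z.im * I := by simpa [hre] using (re_add_im z).symm
  have hreal : ((z.im ^ 4 + A * z.im ^ 2 + B : ℝ) : ℂ) = 0 := by
    rw [← hz, hzI]
    push_cast
    ring_nf
    simp [I_sq, I_pow_four]
  have hpos : 0 < z.im ^ 4 + A * z.im ^ 2 + B := by positivity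
  exact hpos.ne' (by exact_mod_cast hreal)

theorem card_filter_re_neg_pair {w : ℂ} (hw : w.re ≠ 0) :
    (({w, -w} : Multiset ℂ).filter (fun z => z.re < 0)).card = 1 := by
  rcases hw.lt_or_gt with h | h <;>
    simp [Multiset.insert_eq_cons, Multiset.filter_singleton, h, not_lt.mpr h.le]

theorem card_filter_re_pos_pair {w : ℂ} (hw : w.re ≠ 0) :
    (({w, -w} : Multiset ℂ).filter (fun z => 0 < z.re)).card = 1 := by
  rcases hw.lt_or_gt with h | h <;>
    simp [Multiset.insert_eq_cons, Multiset.filter_singleton, h, not_lt.mpr h.le]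

/-- the linearization matrix `J` of the asymptotic adjoint
system (with `b = ψ''(0) > 0`, `a = φ''(0) ≥ 0`) is hyperbolic: no eigenvalue
is purely imaginary or zero, and exactly two eigenvalues (with algebraic
multiplicity, as roots of the characteristic polynomial over `ℂ`) have
negative real part and exactly two have positive real part. -/
theorem linearization_hyperbolic_two_stable_two_unstable
    (a b : ℝ) (ha : 0 ≤ a) (hb : 0 < b) :
    ∀ J : Matrix (Fin 4) (Fin 4) ℝ,
      J = !![0, 1, 0, 0; 0, 0, 0, 1/b; 1, 0, 0, 0; 0, a, -1, 0] →
      ∀ evs : Multiset ℂ,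
        evs = ((J.map (algebraMap ℝ ℂ)).charpoly).roots →
        (∀ z ∈ evs, z.re ≠ 0) ∧
        (evs.filter (fun z => z.re < 0)).card = 2 ∧
        (evs.filter (fun z => 0 < z.re)).card = 2 := by
  rintro J rfl evs rfl
  obtain ⟨u, v, hsum, hprod⟩ :=
    exists_sq_add_sq_eq_and_sq_mul_sq_eq ((a / b : ℝ) : ℂ) ((1 / b : ℝ) : ℂ)
  have hcoef : 0 ≤ a / b := div_nonneg ha hb.le
  have hconst : 0 < 1 / b := one_div_pos.mpr hb
  have hu : u.re ≠ 0 := re_ne_zero_of_biquadratic_eq_zero hcoef hconst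
    (by rw [← hsum, ← hprod]; ring)
  have hv : v.re ≠ 0 := re_ne_zero_of_biquadratic_eq_zero hcoef hconst
    (by rw [← hsum, ← hprod]; ring)
  rw [charpoly_map, charpoly_linearization]
  simp only [Polynomial.map_add, Polynomial.map_sub, Polynomial.map_mul, Polynomial.map_pow, map_X,
    map_C, coe_algebraMap]
  rw [← hsum, ← hprod, roots_biquadratic]
  refine ⟨?_, ?_, ?_⟩
  · simp only [Multiset.mem_add, Multiset.insert_eq_cons, Multiset.mem_cons, Multiset.mem_singleton]
    rintro z ((rfl | rfl) | (rfl | rfl)) <;> simpa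
  · rw [Multiset.filter_add, Multiset.card_add, card_filter_re_neg_pair hu, card_filter_re_neg_pair hv]
  · rw [Multiset.filter_add, Multiset.card_add, card_filter_re_pos_pair hu, card_filter_re_pos_pair hv]
end
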